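/- arXiv:2010.11873 — 2 statements merged into one kernel-verified Lean document; each statement's English description precedes it below -/
import Mathlib

section
/- Let F be a field, let λ, μ be nonzero elements of F, and let i, j be natural numbers. Then ⟨λ⟩_i · ⟨μ⟩_j = ⟨λμ⟩_{i ∧ j}. -/
open scoped Classical in
/-- For positive integers `s`, `t`, `wedge F s t` is the largest value of `i + j + 1` over
pairs `0 ≤ i ≤ s-1`, `0 ≤ j ≤ t-1` such that the binomial coefficient `C(i+j, i)`, viewed
as an element of `F`, is nonzero; moreover `wedge F s 0 = wedge F 0 t = 0`. -/
noncomputable def wedge (F : Type*) [Field F] (s t : ℕ) : ℕ :=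
  ((Finset.range s) ×ˢ (Finset.range t)).sup
    (fun p => if (((p.1 + p.2).choose p.1 : F)) ≠ 0 then p.1 + p.2 + 1 else 0)

open scoped Classical in
/-- `geomSpace F lam s` is the subspace `⟨λ⟩ₛ` of the `F`-algebra of sequences `ℕ → F`:
for `λ ≠ 0` it is spanned by the sequences `k ↦ C(k, i) * λ ^ k` for `0 ≤ i ≤ s - 1`;
`⟨0⟩ₛ` is spanned by the Kronecker-delta sequences `k ↦ δ_{i,k}` for `0 ≤ i ≤ s - 1`;
`⟨η⟩₀` is the zero subspace. -/
noncomputable def geomSpace (F : Type*) [Field F] (lam : F) (s : ℕ) : Submodule F (ℕ → F) :=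
  if lam = 0 then
    Submodule.span F ((fun i : ℕ => (fun k : ℕ => if k = i then (1 : F) else 0)) '' {i | i < s})
  else
    Submodule.span F ((fun i : ℕ => (fun k : ℕ => (k.choose i : F) * lam ^ k)) '' {i | i < s})

/-!
Write `e_c^λ` for the sequence `k ↦ C(k, c) λ^k`. The identity
`C(k, a) C(k, b) = ∑_{d ≤ b} C(k, a + d) C(a + d, a) C(a, b - d)` gives
`e_a^λ e_b^μ = ∑_{d ≤ b} C(a + d, a) C(a, b - d) e_{a+d}^{λμ}`,
a triangular combination whose top coefficient is `C(a + b, a)`. Hence the product space is spanned by the `e_c^{λμ}` with `c = a + b`, `a < i`, `b < j`,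
`C(a + b, a) ≠ 0`; by Pascal's rule this set of `c` is downward closed, so it is
`{c | c < i ∧ j}`.
-/

open Finset
open scoped Pointwise

namespace Nat

theorem choose_mul_choose_eq_sum (k a b : ℕ) :
    k.choose a * k.choose b =
      ∑ d ∈ range (b + 1), k.choose (a + d) * ((a + d).choose a * a.choose (b - d)) := by
  rcases lt_or_ge k a with hka | hak
  · simp [choose_eq_zero_of_lt hka, choose_eq_zero_of_lt (hka.trans_le (le_add_right a _))]
  have vandermonde := add_choose_eq (k - a) a b
  rw [Nat.sub_add_cancel hak, Finset.Nat.sum_antidiagonal_eq_sum_range_succ_mk] at vandermonde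
  simp only [vandermonde, mul_sum, ← mul_assoc, choose_mul (le_add_right a _),
    Nat.add_sub_cancel_left]

theorem exists_choose_ne_zero_of_succ {F : Type*} [Semiring F] {a d n : ℕ}
    (hn : a + d = n + 1) (h : ((n + 1).choose a : F) ≠ 0) :
    ∃ a' ≤ a, ∃ d' ≤ d, a' + d' = n ∧ (n.choose a' : F) ≠ 0 := by
  obtain _ | a := a
  · exact ⟨0, le_rfl, n, by omega, by simp, by simpa using h⟩
  rw [choose_succ_succ', cast_add] at h
  by_cases hn' : (n.choose a : F) = 0
  · rw [hn', zero_add] at h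
    have : a + 1 ≤ n := by
      by_contra hlt
      exact h (by rw [choose_eq_zero_of_lt (by omega), cast_zero])
    exact ⟨a + 1, le_rfl, d - 1, by omega, by omega, h⟩
  · exact ⟨a, by omega, d, le_rfl, by omega, hn'⟩

theorem exists_choose_ne_zero_of_le {F : Type*} [Semiring F] {a d c : ℕ}
    (h : ((a + d).choose a : F) ≠ 0) (hc : c ≤ a + d) :
    ∃ a' ≤ a, ∃ d' ≤ d, a' + d' = c ∧ (c.choose a' : F) ≠ 0 := by
  obtain ⟨k, hk⟩ := Nat.exists_eq_add_of_le hc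
  induction k generalizing a d with
  | zero => exact ⟨a, le_rfl, d, le_rfl, by omega, by rwa [show c = a + d by omega]⟩
  | succ k ih =>
    rw [hk, ← add_assoc] at h
    obtain ⟨a', ha', d', hd', hsum, hne⟩ := exists_choose_ne_zero_of_succ (by omega) h
    obtain ⟨a'', ha'', d'', hd'', hsum', hne'⟩ :=
      ih (by rwa [hsum]) (by omega) (by omega)
    exact ⟨a'', ha''.trans ha', d'', hd''.trans hd', hsum', hne'⟩

end Nat

section wedge

variable {F : Type*} [Field F] {s t : ℕ}

theorem add_lt_wedge {a d : ℕ} (ha : a < s) (hd : d < t) (h : ((a + d).choose a : F) ≠ 0) :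
    a + d < wedge F s t := by
  classical
  have hmem : (a, d) ∈ range s ×ˢ range t := by simp [ha, hd]
  have := le_sup (f := fun p : ℕ × ℕ =>
    if ((p.1 + p.2).choose p.1 : F) ≠ 0 then p.1 + p.2 + 1 else 0) hmem
  rw [wedge]
  simpa [if_pos h] using this

theorem exists_of_lt_wedge {c : ℕ} (hc : c < wedge F s t) :
    ∃ a < s, ∃ d < t, a + d = c ∧ (c.choose a : F) ≠ 0 := by
  classical
  rw [wedge, Finset.lt_sup_iff] at hc
  obtain ⟨⟨a, d⟩, hmem, hlt⟩ := hc
  simp only [mem_product, mem_range] at hmem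
  split_ifs at hlt with h
  · obtain ⟨a', ha', d', hd', hsum, hne⟩ := Nat.exists_choose_ne_zero_of_le (c := c) h (by omega)
    exact ⟨a', by omega, d', by omega, hsum, hne⟩
  · omega

end wedge

def binomGeomSeq {R : Type*} [CommSemiring R] (lam : R) (c : ℕ) : ℕ → R :=
  fun k => k.choose c * lam ^ k

theorem binomGeomSeq_mul {R : Type*} [CommSemiring R] (lam mu : R) (a b : ℕ) :
    binomGeomSeq lam a * binomGeomSeq mu b =
      ∑ d ∈ range (b + 1),
        ((a + d).choose a * a.choose (b - d) : R) • binomGeomSeq (lam * mu) (a + d) := by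
  funext k
  have key := congrArg (Nat.cast (R := R)) (Nat.choose_mul_choose_eq_sum k a b)
  push_cast at key
  simp only [binomGeomSeq, Pi.mul_apply, Finset.sum_apply, Pi.smul_apply, smul_eq_mul]
  rw [mul_mul_mul_comm, ← mul_pow, key, sum_mul]
  exact sum_congr rfl fun _ _ => by ring

section geomSpace

variable {F : Type*} [Field F] {lam mu : F} {i j : ℕ}

theorem geomSpace_of_ne_zero {s : ℕ} (h : lam ≠ 0) :
    geomSpace F lam s = Submodule.span F (binomGeomSeq lam '' Set.Iio s) := by
  rw [geomSpace, if_neg h]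
  rfl

theorem binomGeomSeq_mul_mem_span {a b : ℕ} (ha : a < i) (hb : b < j) :
    binomGeomSeq lam a * binomGeomSeq mu b ∈
      Submodule.span F (binomGeomSeq (lam * mu) '' Set.Iio (wedge F i j)) := by
  rw [binomGeomSeq_mul]
  refine Submodule.sum_mem _ fun d hd => ?_
  by_cases h : ((a + d).choose a : F) = 0
  · simp [h]
  · exact Submodule.smul_mem _ _ <| Submodule.subset_span
      ⟨a + d, add_lt_wedge ha (by simp at hd; omega) h, rfl⟩

theorem binomGeomSeq_mem_span_mul {c : ℕ} (hc : c < wedge F i j) :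
    binomGeomSeq (lam * mu) c ∈
      Submodule.span F (binomGeomSeq lam '' Set.Iio i * binomGeomSeq mu '' Set.Iio j) := by
  set S := Submodule.span F (binomGeomSeq lam '' Set.Iio i * binomGeomSeq mu '' Set.Iio j)
  induction c using Nat.strong_induction_on with
  | _ c ih =>
    obtain ⟨a, ha, d, hd, rfl, hne⟩ := exists_of_lt_wedge hc
    have hprod : binomGeomSeq lam a * binomGeomSeq mu d ∈ S :=
      Submodule.subset_span (Set.mul_mem_mul ⟨a, ha, rfl⟩ ⟨d, hd, rfl⟩)
    have hlower : ∑ e ∈ range d,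
        ((a + e).choose a * a.choose (d - e) : F) • binomGeomSeq (lam * mu) (a + e) ∈ S :=
      Submodule.sum_mem _ fun e he => Submodule.smul_mem _ _ <| by
        have : a + e < a + d := by simp at he; omega
        exact ih _ this (this.trans hc)
    -- the leading term `e = d` of the expansion has coefficient `C(a + d, a)`
    rw [binomGeomSeq_mul, sum_range_succ, Nat.sub_self, Nat.choose_zero_right, Nat.cast_one,
      mul_one] at hprod
    rw [← Submodule.smul_mem_iff S hne]
    simpa using S.sub_mem hprod hlower

end geomSpace

/-- Let `F` be a field, `λ`, `μ` nonzero elements of `F`, and `i`, `j` natural numbers.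
Then `⟨λ⟩ᵢ · ⟨μ⟩ⱼ = ⟨λμ⟩_{i ∧ j}`. -/
theorem geomSpace_mul (F : Type*) [Field F] (lam mu : F) (hlam : lam ≠ 0) (hmu : mu ≠ 0)
    (i j : ℕ) :
    geomSpace F lam i * geomSpace F mu j = geomSpace F (lam * mu) (wedge F i j) := by
  rw [geomSpace_of_ne_zero hlam, geomSpace_of_ne_zero hmu,
    geomSpace_of_ne_zero (mul_ne_zero hlam hmu), Submodule.span_mul_span]
  apply le_antisymm <;> rw [Submodule.span_le]
  · rintro _ ⟨_, ⟨a, ha, rfl⟩, _, ⟨b, hb, rfl⟩, rfl⟩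
    exact binomGeomSeq_mul_mem_span ha hb
  · rintro _ ⟨c, hc, rfl⟩
    exact binomGeomSeq_mem_span_mul hc
end

section
/- Let F be a field, let α, β be nonzero elements of F, and let s, t be positive integers. Then the minimal polynomial of the Kronecker product J_s(α) ⊗ J_t(β) is (X − αβ)^{s ∧ t}. -/
open Polynomial Matrix
open scoped Kronecker

/-- `jordan F s a` is the `s × s` Jordan block with eigenvalue `a`:
the entry `(i, j)` is `a` if `j = i`, `1` if `j = i + 1`, and `0` otherwise. -/
def jordan (F : Type*) [Field F] (s : ℕ) (a : F) : Matrix (Fin s) (Fin s) F :=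
  Matrix.of fun i j => if (j : ℕ) = (i : ℕ) then a else if (j : ℕ) = (i : ℕ) + 1 then 1 else 0

/-! With `N_s = J_s(0)`, `J_s(α) ⊗ J_t(β) - αβ = N_s ⊗ J_t(β) + α (1 ⊗ N_t)` is a sum of two
commuting matrices, so its `k`-th power is `∑ᵢ C(k,i) α^(k-i) N_sⁱ ⊗ J_t(β)ⁱ N_t^(k-i)`.
For `k = s ∧ t` every term vanishes: `N_sⁱ = 0` if `i ≥ s`, `N_t^(k-i) = 0` if `k - i ≥ t`,
and otherwise `C(k,i) = 0` in `F` by maximality of `s ∧ t`. If `s ∧ t = i + j + 1` with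
`C(i+j,i) ≠ 0`, then only the `i`-th term of the `(i+j)`-th power reaches the entry
`((0,0),(i,j))`, where it equals `C(i+j,i) αʲ βⁱ ≠ 0`. So the nilpotency index of
`J_s(α) ⊗ J_t(β) - αβ` is exactly `s ∧ t`. -/

theorem minpoly_eq_X_sub_C_pow {F A : Type*} [Field F] [Ring A] [Algebra F A] {x : A} {c : F}
    {n : ℕ} (hzero : (x - algebraMap F A c) ^ (n + 1) = 0)
    (hne : (x - algebraMap F A c) ^ n ≠ 0) :
    minpoly F x = (X - C c) ^ (n + 1) := by
  have aeval_eq (d : ℕ) : aeval x ((X - C c) ^ d) = (x - algebraMap F A c) ^ d := by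
    simp
  have hint : IsIntegral F x :=
    ⟨_, (monic_X_sub_C c).pow (n + 1), by simpa [aeval_def] using hzero⟩
  obtain ⟨d, hd, hassoc⟩ := (dvd_prime_pow (prime_X_sub_C c) (n + 1)).mp
    (minpoly.dvd F x (by rw [aeval_eq, hzero]))
  have hmin : minpoly F x = (X - C c) ^ d :=
    eq_of_monic_of_associated (minpoly.monic hint) ((monic_X_sub_C c).pow d) hassoc
  obtain rfl : d = n + 1 := by
    by_contra hlt
    refine hne (pow_eq_zero_of_le (by omega : d ≤ n) ?_)
    rw [← aeval_eq, ← hmin, minpoly.aeval]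
  exact hmin

namespace Matrix

variable {m n R : Type*} [DecidableEq m] [DecidableEq n] [CommRing R]

theorem kronecker_sub_smul_one (A : Matrix m m R) (B : Matrix n n R) (a b : R) :
    A ⊗ₖ B - (a * b) • (1 : Matrix (m × n) (m × n) R)
      = (A - a • 1) ⊗ₖ B + a • ((1 : Matrix m m R) ⊗ₖ (B - b • 1)) := by
  ext ⟨i, i'⟩ ⟨j, j'⟩
  by_cases hi : i = j <;> by_cases hi' : i' = j' <;> simp [hi, hi'] <;> ring

variable [Fintype m] [Fintype n]

theorem kronecker_pow (A : Matrix m m R) (B : Matrix n n R) (k : ℕ) :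
    (A ⊗ₖ B) ^ k = (A ^ k) ⊗ₖ (B ^ k) := by
  induction k with
  | zero => simp
  | succ k ih => rw [pow_succ, ih, ← mul_kronecker_mul, ← pow_succ, ← pow_succ]

theorem pow_kronecker_add_smul_one_kronecker (N : Matrix m m R) (B N' : Matrix n n R)
    (hB : Commute B N') (c : R) (k : ℕ) :
    (N ⊗ₖ B + c • ((1 : Matrix m m R) ⊗ₖ N')) ^ k
      = ∑ i ∈ Finset.range (k + 1),
          (k.choose i * c ^ (k - i) : R) • ((N ^ i) ⊗ₖ (B ^ i * N' ^ (k - i))) := by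
  have hcomm : Commute (N ⊗ₖ B) (c • ((1 : Matrix m m R) ⊗ₖ N')) := by
    refine Commute.smul_right ?_ c
    simp only [Commute, SemiconjBy, ← mul_kronecker_mul, mul_one, one_mul, hB.eq]
  rw [hcomm.add_pow]
  refine Finset.sum_congr rfl fun i _ => ?_
  rw [_root_.smul_pow, kronecker_pow, kronecker_pow, one_pow, mul_smul_comm, ← mul_kronecker_mul,
    mul_one, ← Nat.cast_comm, ← nsmul_eq_mul, mul_smul, Nat.cast_smul_eq_nsmul]

end Matrix

section Jordan

variable {F : Type*} [Field F]

theorem jordan_sub_smul_one (s : ℕ) (a : F) : jordan F s a - a • 1 = jordan F s 0 := by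
  ext i j
  simp only [jordan, Matrix.sub_apply, of_apply, Matrix.smul_apply, one_apply, Fin.ext_iff,
    smul_eq_mul]
  split_ifs <;> first | omega | simp

theorem jordan_zero_apply {s : ℕ} (i j : Fin s) :
    jordan F s 0 i j = if (j : ℕ) = i + 1 then 1 else 0 := by
  simp only [jordan, of_apply]
  split_ifs <;> first | rfl | omega

theorem jordan_zero_pow_apply {s : ℕ} (k : ℕ) (i j : Fin s) :
    (jordan F s 0 ^ k) i j = if (j : ℕ) = i + k then 1 else 0 := by
  induction k generalizing i with
  | zero => simp [one_apply, Fin.ext_iff, eq_comm]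
  | succ k ih =>
    rw [pow_succ', mul_apply]
    simp only [jordan_zero_apply, ih, ite_mul, one_mul, zero_mul]
    by_cases h : (i : ℕ) + 1 < s
    · rw [Finset.sum_eq_single ⟨i + 1, h⟩]
      · simp [Nat.add_right_comm _ 1 k, add_assoc]
      · exact fun l _ hl => if_neg fun h' => hl (Fin.ext h')
      · simp
    · rw [if_neg (by have := j.isLt; omega)]
      exact Finset.sum_eq_zero fun l _ => if_neg (by have := l.isLt; omega)

theorem jordan_zero_pow_eq_zero {s k : ℕ} (hk : s ≤ k) : jordan F s 0 ^ k = 0 := by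
  ext i j
  rw [jordan_zero_pow_apply, if_neg (by omega), Matrix.zero_apply]

theorem jordan_pow_apply_self_of_val_eq_zero {s : ℕ} (a : F) (k : ℕ) {i : Fin s}
    (hi : (i : ℕ) = 0) : (jordan F s a ^ k) i i = a ^ k := by
  induction k with
  | zero => simp
  | succ k ih =>
    rw [pow_succ, mul_apply, Finset.sum_eq_single i, ih, pow_succ]
    · simp [jordan]
    · intro l _ hl
      have hl' : (l : ℕ) ≠ 0 := fun h => hl (Fin.ext (h.trans hi.symm))
      simp [jordan, hi, hl'.symm]
    · simp

end Jordan

section Wedge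

variable {F : Type*} [Field F]

theorem le_wedge {s t i j : ℕ} (hi : i < s) (hj : j < t) (hC : ((i + j).choose i : F) ≠ 0) :
    i + j + 1 ≤ wedge F s t := by
  classical
  refine le_of_eq_of_le ?_ (Finset.le_sup (f := fun p : ℕ × ℕ =>
    if ((p.1 + p.2).choose p.1 : F) ≠ 0 then p.1 + p.2 + 1 else 0) (b := (i, j))
    (Finset.mem_product.mpr ⟨Finset.mem_range.mpr hi, Finset.mem_range.mpr hj⟩))
  simp [hC]

theorem exists_eq_wedge {s t : ℕ} (hs : 0 < s) (ht : 0 < t) :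
    ∃ i j, i < s ∧ j < t ∧ ((i + j).choose i : F) ≠ 0 ∧ i + j + 1 = wedge F s t := by
  classical
  obtain ⟨⟨i, j⟩, hij, hsup⟩ := Finset.exists_mem_eq_sup _
    ⟨(0, 0), Finset.mem_product.mpr ⟨Finset.mem_range.mpr hs, Finset.mem_range.mpr ht⟩⟩
    (fun p : ℕ × ℕ => if ((p.1 + p.2).choose p.1 : F) ≠ 0 then p.1 + p.2 + 1 else 0)
  have hpos : 1 ≤ wedge F s t := le_wedge (F := F) hs ht (by simp)
  simp only [Finset.mem_product, Finset.mem_range] at hij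
  change wedge F s t = _ at hsup
  by_cases hC : ((i + j).choose i : F) = 0
  · simp [hC, hsup] at hpos
  · exact ⟨i, j, hij.1, hij.2, hC, by simp [hC, hsup]⟩

end Wedge

section JordanKronecker

variable {F : Type*} [Field F] {s t : ℕ}

theorem jordan_kronecker_sub_smul_one_pow (α β : F) (k : ℕ) :
    (jordan F s α ⊗ₖ jordan F t β - (α * β) • 1) ^ k
      = ∑ i ∈ Finset.range (k + 1), (k.choose i * α ^ (k - i) : F) •
          ((jordan F s 0 ^ i) ⊗ₖ (jordan F t β ^ i * jordan F t 0 ^ (k - i))) := by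
  have hcomm : Commute (jordan F t β) (jordan F t 0) := by
    rw [← jordan_sub_smul_one]
    exact (Commute.refl _).sub_right ((Commute.one_right _).smul_right β)
  rw [kronecker_sub_smul_one, jordan_sub_smul_one, jordan_sub_smul_one,
    pow_kronecker_add_smul_one_kronecker _ _ _ hcomm]

theorem jordan_kronecker_sub_smul_one_pow_wedge (α β : F) :
    (jordan F s α ⊗ₖ jordan F t β - (α * β) • 1) ^ wedge F s t = 0 := by
  rw [jordan_kronecker_sub_smul_one_pow]
  refine Finset.sum_eq_zero fun i hi => ?_
  rw [Finset.mem_range] at hi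
  by_cases his : s ≤ i
  · rw [jordan_zero_pow_eq_zero his, zero_kronecker, smul_zero]
  by_cases hit : t ≤ wedge F s t - i
  · rw [jordan_zero_pow_eq_zero hit, mul_zero, kronecker_zero, smul_zero]
  have hC : ((wedge F s t).choose i : F) = 0 := by
    by_contra hC
    have := le_wedge (F := F) (not_le.mp his) (not_le.mp hit)
      (by rwa [Nat.add_sub_cancel' (by omega)])
    omega
  rw [hC, zero_mul, zero_smul]

theorem jordan_kronecker_sub_smul_one_pow_ne_zero {α β : F} (hα : α ≠ 0) (hβ : β ≠ 0)
    {i j : ℕ} (hi : i < s) (hj : j < t) (hC : ((i + j).choose i : F) ≠ 0) :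
    (jordan F s α ⊗ₖ jordan F t β - (α * β) • 1) ^ (i + j) ≠ 0 := by
  have h0s : 0 < s := by omega
  have h0t : 0 < t := by omega
  have hentry : (jordan F t β ^ i * jordan F t 0 ^ j) ⟨0, h0t⟩ ⟨j, hj⟩ = β ^ i := by
    rw [mul_apply, Finset.sum_eq_single ⟨0, h0t⟩, jordan_pow_apply_self_of_val_eq_zero _ _ rfl,
      jordan_zero_pow_apply, if_pos (by simp), mul_one]
    · intro l _ hl
      rw [jordan_zero_pow_apply, if_neg fun h => hl (Fin.ext (by simp at h ⊢; omega)), mul_zero]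
    · simp
  intro h
  have := congr_fun₂ h (⟨0, h0s⟩, ⟨0, h0t⟩) (⟨i, hi⟩, ⟨j, hj⟩)
  rw [jordan_kronecker_sub_smul_one_pow, Matrix.sum_apply, Finset.sum_eq_single i] at this
  · simp [jordan_zero_pow_apply, hentry, hC, hα, hβ] at this
  · intro l _ hl
    simp [jordan_zero_pow_apply, hl.symm]
  · simp

end JordanKronecker

/-- Let `F` be a field, `α`, `β` nonzero elements of `F`, and `s`, `t` positive integers.
Then the minimal polynomial of `J_s(α) ⊗ J_t(β)` is `(X − αβ) ^ (s ∧ t)`. -/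
theorem minpoly_jordan_kronecker (F : Type*) [Field F] (α β : F) (hα : α ≠ 0) (hβ : β ≠ 0)
    (s t : ℕ) (hs : 0 < s) (ht : 0 < t) :
    minpoly F (jordan F s α ⊗ₖ jordan F t β) = (X - C (α * β)) ^ wedge F s t := by
  obtain ⟨i, j, hi, hj, hC, hw⟩ := exists_eq_wedge (F := F) hs ht
  rw [← hw]
  apply minpoly_eq_X_sub_C_pow <;> rw [Algebra.algebraMap_eq_smul_one]
  · rw [hw]
    exact jordan_kronecker_sub_smul_one_pow_wedge α β
  · exact jordan_kronecker_sub_smul_one_pow_ne_zero hα hβ hi hj hC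
end
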